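/- Let p be a real polynomial of degree at most K-1. Then the set {φ ∈ ℝ : p(φ) ≥ 0} is a finite union of intervals, and the number of its boundary points that are not the infimum or supremum of the set (the inner boundaries) is at most 2⌊(K-1)/2⌋. -/
import Mathlib


/-- The inner boundaries of a set `T ⊆ ℝ` (allowing `T` to be unbounded): frontier points
of `T` that are neither the infimum nor the supremum of `T`, i.e. there are points of `T`
strictly on both sides. -/
def innerBoundarySet (T : Set ℝ) : Set ℝ :=
  {x ∈ frontier T | (∃ y ∈ T, y < x) ∧ (∃ y ∈ T, x < y)}

open Polynomial Set Filter

private lemma ivtL (p : Polynomial ℝ) {x z : ℝ} (hxz : x ≤ z) (hx : 0 ≤ p.eval x)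
    (hz : p.eval z < 0) : ∃ r, p.eval r = 0 ∧ x ≤ r ∧ r < z := by
  have h0 : (0:ℝ) ∈ Set.Icc (p.eval z) (p.eval x) := ⟨hz.le, hx⟩
  obtain ⟨r, hr, hr0⟩ :=
    intermediate_value_Icc' hxz (p.continuous.continuousOn (s := Set.Icc x z)) h0
  refine ⟨r, hr0, hr.1, lt_of_le_of_ne hr.2 ?_⟩
  rintro rfl
  exact hz.ne hr0

private lemma ivtR (p : Polynomial ℝ) {z y : ℝ} (hzy : z ≤ y) (hz : p.eval z < 0)
    (hy : 0 ≤ p.eval y) : ∃ r, p.eval r = 0 ∧ z < r ∧ r ≤ y := by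
  have h0 : (0:ℝ) ∈ Set.Icc (p.eval z) (p.eval y) := ⟨hz.le, hy⟩
  obtain ⟨r, hr, hr0⟩ :=
    intermediate_value_Icc hzy (p.continuous.continuousOn (s := Set.Icc z y)) h0
  refine ⟨r, hr0, lt_of_le_of_ne hr.1 ?_, hr.2⟩
  rintro rfl
  exact hz.ne hr0

private lemma exists_excluded_min (p : Polynomial ℝ)
    (hne : {φ : ℝ | 0 ≤ p.eval φ}.Nonempty)
    (hbdd : BddBelow {φ : ℝ | 0 ≤ p.eval φ}) :
    ∃ x₀, p.eval x₀ = 0 ∧ x₀ ∉ innerBoundarySet {φ : ℝ | 0 ≤ p.eval φ} := by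
  set T := {φ : ℝ | 0 ≤ p.eval φ} with hT
  have hcl : IsClosed T := isClosed_le continuous_const p.continuous
  have hmem : sInf T ∈ T := hcl.csInf_mem hne hbdd
  refine ⟨sInf T, ?_, ?_⟩
  · by_contra h
    have hpos : 0 < p.eval (sInf T) := lt_of_le_of_ne hmem (Ne.symm h)
    have hU : IsOpen {x : ℝ | 0 < p.eval x} := isOpen_lt continuous_const p.continuous
    obtain ⟨ε, hε, hball⟩ := Metric.isOpen_iff.1 hU _ hpos
    have hmemball : sInf T - ε/2 ∈ Metric.ball (sInf T) ε := by
      simp only [Metric.mem_ball, Real.dist_eq]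
      rw [show sInf T - ε/2 - sInf T = -(ε/2) by ring, abs_neg, abs_of_nonneg (by linarith)]
      linarith
    have h2 : (0:ℝ) < p.eval (sInf T - ε/2) := hball hmemball
    have : sInf T ≤ sInf T - ε/2 := csInf_le hbdd h2.le
    linarith
  · rintro ⟨-, ⟨y, hyT, hylt⟩, -⟩
    exact absurd (csInf_le hbdd hyT) (not_le.2 hylt)

private lemma exists_excluded_max (p : Polynomial ℝ)
    (hne : {φ : ℝ | 0 ≤ p.eval φ}.Nonempty)
    (hbdd : BddAbove {φ : ℝ | 0 ≤ p.eval φ}) :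
    ∃ x₀, p.eval x₀ = 0 ∧ x₀ ∉ innerBoundarySet {φ : ℝ | 0 ≤ p.eval φ} := by
  set T := {φ : ℝ | 0 ≤ p.eval φ} with hT
  have hcl : IsClosed T := isClosed_le continuous_const p.continuous
  have hmem : sSup T ∈ T := hcl.csSup_mem hne hbdd
  refine ⟨sSup T, ?_, ?_⟩
  · by_contra h
    have hpos : 0 < p.eval (sSup T) := lt_of_le_of_ne hmem (Ne.symm h)
    have hU : IsOpen {x : ℝ | 0 < p.eval x} := isOpen_lt continuous_const p.continuous
    obtain ⟨ε, hε, hball⟩ := Metric.isOpen_iff.1 hU _ hpos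
    have hmemball : sSup T + ε/2 ∈ Metric.ball (sSup T) ε := by
      simp only [Metric.mem_ball, Real.dist_eq]
      rw [show sSup T + ε/2 - sSup T = ε/2 by ring, abs_of_nonneg (by linarith)]
      linarith
    have h2 : (0:ℝ) < p.eval (sSup T + ε/2) := hball hmemball
    have : sSup T + ε/2 ≤ sSup T := le_csSup hbdd h2.le
    linarith
  · rintro ⟨-, -, ⟨y, hyT, hylt⟩⟩
    exact absurd (le_csSup hbdd hyT) (not_le.2 hylt)

theorem stmt_2 (K : ℕ) (hK : 1 ≤ K) (p : Polynomial ℝ) (hp : p ≠ 0)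
    (hdeg : p.natDegree ≤ K - 1) :
    (∃ 𝒮 : Finset (Set ℝ), (∀ I ∈ 𝒮, I.OrdConnected) ∧
        {φ : ℝ | 0 ≤ p.eval φ} = ⋃₀ (𝒮 : Set (Set ℝ))) ∧
      (innerBoundarySet {φ : ℝ | 0 ≤ p.eval φ}).ncard ≤ 2 * ((K - 1) / 2) := by
  classical
  set T : Set ℝ := {φ : ℝ | 0 ≤ p.eval φ} with hTdef
  set Z : Set ℝ := {x : ℝ | p.eval x = 0} with hZdef
  have hZfin : Z.Finite := p.finite_setOf_isRoot hp
  set R : Finset ℝ := hZfin.toFinset with hRdef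
  have hRmem : ∀ {r : ℝ}, r ∈ R ↔ p.eval r = 0 := by
    intro r; simp [hRdef, Set.Finite.mem_toFinset, hZdef]
  have hTnot : ∀ {w : ℝ}, w ∉ T → p.eval w < 0 := fun hw => not_le.1 hw
  constructor
  · by_cases hR : R.Nonempty
    · set m := R.min' hR with hm
      set M := R.max' hR with hM
      set 𝒮 : Finset (Set ℝ) :=
        (((R ×ˢ R).filter (fun ab => ∀ z : ℝ, ab.1 < z → z < ab.2 → 0 ≤ p.eval z)).image
          (fun ab => T ∩ Set.Icc ab.1 ab.2)) ∪ {T ∩ Set.Iic m, T ∩ Set.Ici M} with h𝒮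
      have hmemIic : T ∩ Set.Iic m ∈ 𝒮 := by
        rw [h𝒮]; exact Finset.mem_union_right _ (by simp)
      have hmemIci : T ∩ Set.Ici M ∈ 𝒮 := by
        rw [h𝒮]; exact Finset.mem_union_right _ (by simp)
      refine ⟨𝒮, ?_, ?_⟩
      · intro I hI
        rw [h𝒮, Finset.mem_union] at hI
        rcases hI with hI | hI
        · rw [Finset.mem_image] at hI
          obtain ⟨⟨a, b⟩, hab, rfl⟩ := hI
          rw [Finset.mem_filter, Finset.mem_product] at hab
          obtain ⟨⟨haR, hbR⟩, hfree⟩ := hab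
          constructor
          rintro x ⟨hxT, hxab⟩ y ⟨hyT, hyab⟩ z hz
          refine ⟨?_, le_trans hxab.1 hz.1, le_trans hz.2 hyab.2⟩
          by_contra h
          have h' : p.eval z < 0 := hTnot h
          have hza : a < z := lt_of_le_of_ne (le_trans hxab.1 hz.1)
            (by rintro rfl; exact absurd (hRmem.1 haR) h'.ne)
          have hzb : z < b := lt_of_le_of_ne (le_trans hz.2 hyab.2)
            (by rintro rfl; exact absurd (hRmem.1 hbR) h'.ne)
          exact absurd (hfree z hza hzb) (not_le.2 h')
        · simp only [Finset.mem_insert, Finset.mem_singleton] at hI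
          rcases hI with rfl | rfl
          · constructor
            rintro x ⟨hxT, hxm⟩ y ⟨hyT, hym⟩ z hz
            refine ⟨?_, le_trans hz.2 hym⟩
            by_contra h
            have h' : p.eval z < 0 := hTnot h
            obtain ⟨r, hr0, hxr, hrz⟩ := ivtL p hz.1 hxT h'
            have : m ≤ r := Finset.min'_le R r (hRmem.2 hr0)
            have : z ≤ m := le_trans hz.2 hym
            linarith
          · constructor
            rintro x ⟨hxT, hxM⟩ y ⟨hyT, hyM⟩ z hz
            refine ⟨?_, le_trans hxM hz.1⟩
            by_contra h
            have h' : p.eval z < 0 := hTnot h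
            obtain ⟨r, hr0, hzr, hry⟩ := ivtR p hz.2 h' hyT
            have : r ≤ M := Finset.le_max' R r (hRmem.2 hr0)
            have : M ≤ z := le_trans hxM hz.1
            linarith
      · ext x
        constructor
        · intro hx
          rcases le_or_gt x m with h1 | h1
          · exact ⟨T ∩ Set.Iic m, hmemIic, hx, h1⟩
          rcases le_or_gt M x with h2 | h2
          · exact ⟨T ∩ Set.Ici M, hmemIci, hx, h2⟩
          · set Rle := R.filter (fun r => r ≤ x) with hRle
            have hRlene : Rle.Nonempty := ⟨m, Finset.mem_filter.2 ⟨R.min'_mem hR, h1.le⟩⟩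
            set Rge := R.filter (fun r => x ≤ r) with hRge
            have hRgene : Rge.Nonempty := ⟨M, Finset.mem_filter.2 ⟨R.max'_mem hR, h2.le⟩⟩
            set a := Rle.max' hRlene with ha
            set b := Rge.min' hRgene with hb
            have haR : a ∈ R ∧ a ≤ x := Finset.mem_filter.1 (Rle.max'_mem hRlene)
            have hbR : b ∈ R ∧ x ≤ b := Finset.mem_filter.1 (Rge.min'_mem hRgene)
            have hfree : ∀ z : ℝ, a < z → z < b → 0 ≤ p.eval z := by
              intro z hz1 hz2
              by_contra h
              push_neg at h
              rcases le_or_gt z x with hzx | hzx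
              · obtain ⟨r, hr0, hzr, hrx⟩ := ivtR p hzx h hx
                have : r ≤ a := Finset.le_max' Rle r (Finset.mem_filter.2 ⟨hRmem.2 hr0, hrx⟩)
                linarith
              · obtain ⟨r, hr0, hxr, hrz⟩ := ivtL p hzx.le hx h
                have : b ≤ r := Finset.min'_le Rge r (Finset.mem_filter.2 ⟨hRmem.2 hr0, hxr⟩)
                linarith
            refine ⟨T ∩ Set.Icc a b, ?_, hx, haR.2, hbR.2⟩
            rw [h𝒮]
            refine Finset.mem_coe.2 (Finset.mem_union_left _ (Finset.mem_image.2
              ⟨(a, b), Finset.mem_filter.2 ⟨Finset.mem_product.2 ⟨haR.1, hbR.1⟩, hfree⟩, rfl⟩))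
        · rintro ⟨I, hI, hxI⟩
          rw [Finset.mem_coe, h𝒮, Finset.mem_union] at hI
          rcases hI with hI | hI
          · obtain ⟨ab, -, rfl⟩ := Finset.mem_image.1 hI
            exact hxI.1
          · simp only [Finset.mem_insert, Finset.mem_singleton] at hI
            rcases hI with rfl | rfl
            · exact hxI.1
            · exact hxI.1
    · refine ⟨{T}, ?_, ?_⟩
      · intro I hI
        rw [Finset.mem_singleton] at hI
        subst hI
        constructor
        intro x hx y hy z hz
        by_contra h
        have h' : p.eval z < 0 := not_le.1 h
        obtain ⟨r, hr0, -, -⟩ := ivtL p hz.1 hx h'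
        exact hR ⟨r, hRmem.2 hr0⟩
      · simp
  · have hSsub : innerBoundarySet T ⊆ Z := by
      rintro x ⟨hfr, -, -⟩
      have hcl : IsClosed T := isClosed_le continuous_const p.continuous
      rw [frontier_eq_closure_inter_closure] at hfr
      have hge : 0 ≤ p.eval x := hcl.closure_subset hfr.1
      have hcompl : Tᶜ = {z : ℝ | p.eval z < 0} := by
        ext z; simp [hTdef, not_le]
      have hle : p.eval x ≤ 0 := by
        have hsub : closure {z : ℝ | p.eval z < 0} ⊆ {z : ℝ | p.eval z ≤ 0} :=
          closure_minimal (fun z (hz : p.eval z < 0) => le_of_lt hz) (isClosed_le p.continuous continuous_const)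
        exact hsub (hcompl ▸ hfr.2)
      exact le_antisymm hle hge
    have hSfin : (innerBoundarySet T).Finite := hZfin.subset hSsub
    have hZcard : Z.ncard ≤ p.natDegree := by
      have hset : Z = ↑p.roots.toFinset := by
        ext x
        simp [hZdef, Polynomial.mem_roots, hp, Polynomial.IsRoot]
      rw [hset, Set.ncard_coe_finset]
      exact le_trans (Multiset.toFinset_card_le _) (p.card_roots')
    rcases le_or_gt p.natDegree (2 * ((K - 1) / 2)) with hcase | hcase
    · exact le_trans (le_trans (Set.ncard_le_ncard hSsub hZfin) hZcard) hcase
    · have hodd : Odd p.natDegree := by rw [Nat.odd_iff]; omega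
      have hlc : p.leadingCoeff ≠ 0 := Polynomial.leadingCoeff_ne_zero.2 hp
      have hdpos : 0 < p.degree := Polynomial.natDegree_pos_iff_degree_pos.1 (by omega)
      set q : Polynomial ℝ := p.comp (-Polynomial.X) with hq
      have hqeval : ∀ x : ℝ, q.eval x = p.eval (-x) := by
        intro x; simp [hq, Polynomial.eval_comp]
      have hqlc : q.leadingCoeff = -p.leadingCoeff := by
        rw [hq, Polynomial.leadingCoeff_comp (by simp)]
        simp [hodd.neg_one_pow]
      have hqdeg : q.natDegree = p.natDegree := by
        rw [hq, Polynomial.natDegree_comp]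
        simp
      have hqdpos : 0 < q.degree := Polynomial.natDegree_pos_iff_degree_pos.1 (by omega)
      have hkey : ∃ x₀, p.eval x₀ = 0 ∧ x₀ ∉ innerBoundarySet T := by
        rcases hlc.lt_or_gt with hneg | hpos
        · have hne : T.Nonempty := by
            have ht : Filter.Tendsto (fun x => q.eval x) Filter.atTop Filter.atTop :=
              Polynomial.tendsto_atTop_of_leadingCoeff_nonneg q hqdpos (by rw [hqlc]; linarith)
            obtain ⟨x, hx⟩ := (ht.eventually_ge_atTop 0).exists
            exact ⟨-x, by rw [hTdef]; simpa [hqeval] using hx⟩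
          have hbdd : BddAbove T := by
            have ht : Filter.Tendsto (fun x => p.eval x) Filter.atTop Filter.atBot :=
              Polynomial.tendsto_atBot_of_leadingCoeff_nonpos p hdpos hneg.le
            obtain ⟨B, hB⟩ := Filter.eventually_atTop.1 (ht.eventually_lt_atBot 0)
            refine ⟨B, fun y hy => ?_⟩
            by_contra hyB
            push_neg at hyB
            have : p.eval y < 0 := hB y hyB.le
            rw [hTdef] at hy
            exact absurd hy (not_le.2 this)
          exact exists_excluded_max p hne hbdd
        · have hne : T.Nonempty := by
            have ht : Filter.Tendsto (fun x => p.eval x) Filter.atTop Filter.atTop :=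
              Polynomial.tendsto_atTop_of_leadingCoeff_nonneg p hdpos hpos.le
            obtain ⟨x, hx⟩ := (ht.eventually_ge_atTop 0).exists
            exact ⟨x, hx⟩
          have hbdd : BddBelow T := by
            have ht : Filter.Tendsto (fun x => q.eval x) Filter.atTop Filter.atBot :=
              Polynomial.tendsto_atBot_of_leadingCoeff_nonpos q hqdpos (by rw [hqlc]; linarith)
            obtain ⟨B, hB⟩ := Filter.eventually_atTop.1 (ht.eventually_lt_atBot 0)
            refine ⟨-B, fun y hy => ?_⟩
            by_contra hyB
            push_neg at hyB
            have h1 : q.eval (-y) < 0 := hB (-y) (by linarith)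
            rw [hqeval, neg_neg] at h1
            rw [hTdef] at hy
            exact absurd hy (not_le.2 h1)
          exact exists_excluded_min p hne hbdd
      obtain ⟨x₀, hx₀Z, hx₀S⟩ := hkey
      have hins : insert x₀ (innerBoundarySet T) ⊆ Z := Set.insert_subset hx₀Z hSsub
      have hcard := Set.ncard_le_ncard hins hZfin
      rw [Set.ncard_insert_of_notMem hx₀S hSfin] at hcard
      omega
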